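/- Let j be odd, and let x, m, p ⊆ ⟦n⟧_{j+1} and x̄, x̂, m̄, m̂, p̄, p̂ ⊆ ⟦n⟧_{j+2}. Then the movement condition (x̄⊖ ∪ x⊙ ∪ x̂⊕) : (m̄⊖ ∪ m⊙ ∪ m̂⊕) ⇝ (p̄⊖ ∪ p⊙ ∪ p̂⊕) holds if and only if the following six conditions hold: p = (m ∪ x⁺)\x⁻; m = (p ∪ x⁻)\x⁺; p̄ = (m̄ ∪ x̄⁺)\(x̄⁻ ∪ x); m̄ = (p̄ ∪ x̄⁻ ∪ x)\x̄⁺; p̂ = (m̂ ∪ x̂⁺ ∪ x)\x̂⁻; m̂ = (p̂ ∪ x̂⁻)\(x̂⁺ ∪ x). -/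

import Mathlib

/-!
Sorting the strings of `⟦n+1⟧` by their last symbol identifies a subset of `⟦n+1⟧_{j+1}` with a
triple `ā⊖ ∪ a⊙ ∪ â⊕`, and union and difference act componentwise on triples. The faces of
`a⊖` and `a⊕` are the faces of `a` with the same symbol appended. The faces of `a⊙` are the
`(a^±)⊙` together with one face from replacing the final `⊙`: since `a ∈ ⟦n⟧_{j+1}` with `j + 1`
even, that `⊙` is preceded by an even number of `⊙`s, so it becomes `a⊕` in `(a⊙)⁺` and `a⊖` in
`(a⊙)⁻`. Hence `(x̄⊖ ∪ x⊙ ∪ x̂⊕)⁺ = x̄⁺⊖ ∪ x⁺⊙ ∪ (x̂⁺ ∪ x)⊕` and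
`(x̄⊖ ∪ x⊙ ∪ x̂⊕)⁻ = (x̄⁻ ∪ x)⊖ ∪ x⁻⊙ ∪ x̂⁻⊕`, and each of the two movement equations splits
into three componentwise ones.
-/

/-- The three symbols `⊖`, `⊙`, `⊕`. -/
inductive CSym : Type
  | minus : CSym
  | mid : CSym
  | plus : CSym
deriving DecidableEq

/-- `Str n j` is `⟦n⟧_j`: strings of length `n` over `{⊖,⊙,⊕}` with exactly `j`
occurrences of `⊙`. -/
def Str (n j : ℕ) : Type := {l : List CSym // l.length = n ∧ l.count CSym.mid = j}

/-- The even faces `a⁺` of `a ∈ ⟦n⟧_{j+1}`: replace the `i`-th occurrence of `⊙`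
by `⊕` if `i` is odd (i.e. the number of earlier `⊙`'s is even), and by `⊖` if
`i` is even. -/
def posF {n j : ℕ} (a : Str n (j+1)) : Set (Str n j) :=
  {b | ∃ (q : ℕ) (h : q < a.1.length), a.1.get ⟨q, h⟩ = CSym.mid ∧
    b.1 = a.1.set q (if Even ((a.1.take q).count CSym.mid) then CSym.plus else CSym.minus)}

/-- The odd faces `a⁻` of `a ∈ ⟦n⟧_{j+1}`: replace the `i`-th occurrence of `⊙`
by `⊖` if `i` is odd, and by `⊕` if `i` is even. -/
def negF {n j : ℕ} (a : Str n (j+1)) : Set (Str n j) :=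
  {b | ∃ (q : ℕ) (h : q < a.1.length), a.1.get ⟨q, h⟩ = CSym.mid ∧
    b.1 = a.1.set q (if Even ((a.1.take q).count CSym.mid) then CSym.minus else CSym.plus)}

def sPos {n j : ℕ} (ξ : Set (Str n (j+1))) : Set (Str n j) := ⋃ a ∈ ξ, posF a
def sNeg {n j : ℕ} (ξ : Set (Str n (j+1))) : Set (Str n j) := ⋃ a ∈ ξ, negF a

/-- Append `⊖` to a string. -/
def appM {n j : ℕ} (a : Str n j) : Str (n+1) j :=
  ⟨a.1 ++ [CSym.minus], by
    refine ⟨by simp [a.2.1], ?_⟩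
    simp [List.count_append, a.2.2, List.count_singleton]⟩

/-- Append `⊕` to a string. -/
def appP {n j : ℕ} (a : Str n j) : Str (n+1) j :=
  ⟨a.1 ++ [CSym.plus], by
    refine ⟨by simp [a.2.1], ?_⟩
    simp [List.count_append, a.2.2, List.count_singleton]⟩

/-- Append `⊙` to a string. -/
def appO {n j : ℕ} (a : Str n j) : Str (n+1) (j+1) :=
  ⟨a.1 ++ [CSym.mid], by
    refine ⟨by simp [a.2.1], ?_⟩
    simp [List.count_append, a.2.2, List.count_singleton]⟩

/-- A subset of `⟦n⟧_{j+1}` is well-formed if distinct elements share no even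
face and no odd face. -/
def WfC {n j : ℕ} (ξ : Set (Str n (j+1))) : Prop :=
  ∀ a ∈ ξ, ∀ b ∈ ξ, a ≠ b → posF a ∩ posF b = ∅ ∧ negF a ∩ negF b = ∅

/-- `ξ` moves `μ` to `π`. -/
def MovesC {n j : ℕ} (ξ : Set (Str n (j+1))) (μ π : Set (Str n j)) : Prop :=
  π = (μ ∪ sPos ξ) \ sNeg ξ ∧ μ = (π ∪ sNeg ξ) \ sPos ξ

open Set

lemma Set.preimage_image_eq_empty_of_ne {α β γ : Type*} {f : α → γ} {g : β → γ}
    (h : ∀ a b, f a ≠ g b) (s : Set β) : f ⁻¹' (g '' s) = ∅ :=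
  eq_empty_of_forall_notMem fun a ⟨b, _, hb⟩ => h a b hb.symm

/-- `posF` and `negF` use `(s, t) = (⊕, ⊖)` and `(⊖, ⊕)` respectively. -/
def faceList (s t : CSym) (l : List CSym) (q : ℕ) : List CSym :=
  l.set q (if Even ((l.take q).count .mid) then s else t)

def listFaces (s t : CSym) (l : List CSym) : Set (List CSym) :=
  {l' | ∃ (q : ℕ) (h : q < l.length), l[q] = .mid ∧ l' = faceList s t l q}

section ListFaces

variable {s t e : CSym} {l : List CSym}

lemma faceList_append_singleton {q : ℕ} (hq : q < l.length) :
    faceList s t (l ++ [e]) q = faceList s t l q ++ [e] := by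
  rw [faceList, faceList, List.take_append_of_le_length hq.le, List.set_append_left _ _ hq]

lemma faceList_append_singleton_length :
    faceList s t (l ++ [e]) l.length = l ++ [if Even (l.count .mid) then s else t] := by
  rw [faceList, List.take_append_of_le_length le_rfl, List.take_length,
    List.set_append_right _ _ le_rfl]
  simp

lemma listFaces_append_singleton :
    listFaces s t (l ++ [e]) = (· ++ [e]) '' listFaces s t l ∪
      {l' | e = .mid ∧ l' = l ++ [if Even (l.count .mid) then s else t]} := by
  ext l'
  simp only [listFaces, mem_union, mem_image, mem_ofPred_eq]
  constructor
  · rintro ⟨q, hq, hmid, rfl⟩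
    rcases (Nat.lt_succ_iff.1 (by simpa using hq)).lt_or_eq with hlt | rfl
    · rw [List.getElem_append_left hlt] at hmid
      exact Or.inl ⟨_, ⟨q, hlt, hmid, rfl⟩, (faceList_append_singleton hlt).symm⟩
    · exact Or.inr ⟨by simpa using hmid, faceList_append_singleton_length⟩
  · rintro (⟨_, ⟨q, hq, hmid, rfl⟩, rfl⟩ | ⟨rfl, rfl⟩)
    · exact ⟨q, by simp; omega, by rwa [List.getElem_append_left hq],
        (faceList_append_singleton hq).symm⟩
    · exact ⟨l.length, by simp, by simp, faceList_append_singleton_length.symm⟩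

end ListFaces

namespace Str

variable {n j : ℕ}

def snoc (c : CSym) (hc : c ≠ .mid) (a : Str n j) : Str (n+1) j :=
  ⟨a.1 ++ [c], by simp [a.2.1], by simp [List.count_append, a.2.2, hc]⟩

def toList (a : Str n j) : List CSym := a.1

lemma toList_snoc (c : CSym) (hc : c ≠ .mid) (a : Str n j) :
    (snoc c hc a).toList = a.toList ++ [c] := rfl

lemma toList_appO (a : Str n j) : (appO a).toList = a.toList ++ [.mid] := rfl

lemma length_toList (a : Str n j) : a.toList.length = n := a.2.1

lemma count_toList (a : Str n j) : a.toList.count .mid = j := a.2.2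

lemma toList_injective : Function.Injective (toList : Str n j → List CSym) :=
  fun _ _ => Subtype.ext

def faces (s t : CSym) (a : Str n (j+1)) : Set (Str n j) :=
  toList ⁻¹' listFaces s t a.toList

variable {s t : CSym}

lemma listFaces_subset_range_toList (hs : s ≠ .mid) (ht : t ≠ .mid) (a : Str n (j+1)) :
    listFaces s t a.toList ⊆ range (toList : Str n j → List CSym) := by
  rintro _ ⟨q, hq, hmid, rfl⟩
  have hc : (if Even ((a.toList.take q).count .mid) then s else t) ≠ .mid := by
    split_ifs <;> assumption
  refine ⟨⟨faceList s t a.toList q, ?_, ?_⟩, rfl⟩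
  · rw [faceList, List.length_set, length_toList]
  · simp [faceList, List.count_set hq, hmid, count_toList, hc]

lemma image_toList_faces (hs : s ≠ .mid) (ht : t ≠ .mid) (a : Str n (j+1)) :
    toList '' faces s t a = listFaces s t a.toList :=
  image_preimage_eq_of_subset (listFaces_subset_range_toList hs ht a)

lemma image_toList_image_snoc {c : CSym} (hc : c ≠ .mid) (S : Set (Str n j)) :
    toList '' (snoc c hc '' S) = (· ++ [c]) '' (toList '' S) := by
  simp only [image_image]; rfl

lemma image_toList_image_appO (S : Set (Str n j)) :
    toList '' (appO '' S) = (· ++ [CSym.mid]) '' (toList '' S) := by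
  simp only [image_image]; rfl

lemma faces_snoc (hs : s ≠ .mid) (ht : t ≠ .mid) {e : CSym} (he : e ≠ .mid)
    (a : Str n (j+1)) : faces s t (snoc e he a) = snoc e he '' faces s t a := by
  apply image_injective.2 toList_injective
  rw [image_toList_image_snoc, image_toList_faces hs ht, image_toList_faces hs ht, toList_snoc,
    listFaces_append_singleton]
  simp [he]

lemma faces_appO (hs : s ≠ .mid) (ht : t ≠ .mid) (heven : Even (j+1)) (a : Str n (j+1)) :
    faces s t (appO a) = insert (snoc s hs a) (appO '' faces s t a) := by
  apply image_injective.2 toList_injective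
  rw [image_insert_eq, image_toList_image_appO, image_toList_faces hs ht, image_toList_faces hs ht,
    toList_appO, toList_snoc, listFaces_append_singleton]
  simp only [true_and, ofPred_eq_eq_singleton, count_toList, if_pos heven, union_singleton]

lemma appM_eq_snoc : (appM : Str n j → Str (n+1) j) = snoc .minus (by decide) := rfl

lemma appP_eq_snoc : (appP : Str n j → Str (n+1) j) = snoc .plus (by decide) := rfl

def sFaces (s t : CSym) (ξ : Set (Str n (j+1))) : Set (Str n j) := ⋃ a ∈ ξ, faces s t a

lemma sPos_eq_sFaces (ξ : Set (Str n (j+1))) : sPos ξ = sFaces .plus .minus ξ := rfl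

lemma sNeg_eq_sFaces (ξ : Set (Str n (j+1))) : sNeg ξ = sFaces .minus .plus ξ := rfl

lemma sFaces_union (ξ η : Set (Str n (j+1))) : sFaces s t (ξ ∪ η) = sFaces s t ξ ∪ sFaces s t η :=
  biUnion_union ξ η _

lemma sFaces_image_snoc (hs : s ≠ .mid) (ht : t ≠ .mid) {e : CSym} (he : e ≠ .mid)
    (S : Set (Str n (j+1))) : sFaces s t (snoc e he '' S) = snoc e he '' sFaces s t S := by
  simp only [sFaces, biUnion_image, faces_snoc hs ht he, image_iUnion₂]

lemma sFaces_image_appO (hs : s ≠ .mid) (ht : t ≠ .mid) (heven : Even (j+1))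
    (S : Set (Str n (j+1))) : sFaces s t (appO '' S) = snoc s hs '' S ∪ appO '' sFaces s t S := by
  simp only [sFaces, biUnion_image, faces_appO hs ht heven, insert_eq, iUnion_union_distrib,
    image_iUnion₂, ← image_eq_iUnion]

/-- The set `A⊖ ∪ B⊙ ∪ C⊕`. -/
def glue (A : Set (Str n (j+1))) (B : Set (Str n j)) (C : Set (Str n (j+1))) :
    Set (Str (n+1) (j+1)) :=
  appM '' A ∪ appO '' B ∪ appP '' C

lemma sFaces_glue (hs : s ≠ .mid) (ht : t ≠ .mid) (heven : Even (j+1)) (A : Set (Str n (j+2)))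
    (B : Set (Str n (j+1))) (C : Set (Str n (j+2))) :
    sFaces s t (glue A B C) =
      glue (sFaces s t A) (sFaces s t B) (sFaces s t C) ∪ snoc s hs '' B := by
  simp only [glue, appM_eq_snoc, appP_eq_snoc, sFaces_union, sFaces_image_snoc hs ht,
    sFaces_image_appO hs ht heven]
  ac_rfl

lemma sPos_glue (heven : Even (j+1)) (A : Set (Str n (j+2))) (B : Set (Str n (j+1)))
    (C : Set (Str n (j+2))) : sPos (glue A B C) = glue (sPos A) (sPos B) (sPos C ∪ B) := by
  rw [sPos_eq_sFaces, sFaces_glue (by decide) (by decide) heven, glue, glue, image_union,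
    ← appP_eq_snoc, union_assoc]
  rfl

lemma sNeg_glue (heven : Even (j+1)) (A : Set (Str n (j+2))) (B : Set (Str n (j+1)))
    (C : Set (Str n (j+2))) : sNeg (glue A B C) = glue (sNeg A ∪ B) (sNeg B) (sNeg C) := by
  rw [sNeg_eq_sFaces, sFaces_glue (by decide) (by decide) heven, glue, glue, image_union,
    ← appM_eq_snoc]
  ac_rfl

lemma appM_injective : Function.Injective (appM : Str n j → Str (n+1) j) :=
  fun _ _ h => toList_injective (List.append_cancel_right (congrArg toList h))

lemma appO_injective : Function.Injective (appO : Str n j → Str (n+1) (j+1)) :=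
  fun _ _ h => toList_injective (List.append_cancel_right (congrArg toList h))

lemma appP_injective : Function.Injective (appP : Str n j → Str (n+1) j) :=
  fun _ _ h => toList_injective (List.append_cancel_right (congrArg toList h))

lemma appM_ne_appO (a : Str n (j+1)) (b : Str n j) : appM a ≠ appO b := fun h => by
  simpa using (List.append_inj' (congrArg toList h) rfl).2

lemma appM_ne_appP (a b : Str n j) : appM a ≠ appP b := fun h => by
  simpa using (List.append_inj' (congrArg toList h) rfl).2

lemma appO_ne_appP (a : Str n j) (b : Str n (j+1)) : appO a ≠ appP b := fun h => by
  simpa using (List.append_inj' (congrArg toList h) rfl).2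

lemma preimage_appM_glue (A : Set (Str n (j+1))) (B : Set (Str n j)) (C : Set (Str n (j+1))) :
    appM ⁻¹' glue A B C = A := by
  rw [glue, preimage_union, preimage_union, appM_injective.preimage_image,
    preimage_image_eq_empty_of_ne appM_ne_appO, preimage_image_eq_empty_of_ne appM_ne_appP,
    union_empty, union_empty]

lemma preimage_appO_glue (A : Set (Str n (j+1))) (B : Set (Str n j)) (C : Set (Str n (j+1))) :
    appO ⁻¹' glue A B C = B := by
  rw [glue, preimage_union, preimage_union, appO_injective.preimage_image,
    preimage_image_eq_empty_of_ne fun a b => (appM_ne_appO b a).symm,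
    preimage_image_eq_empty_of_ne appO_ne_appP, empty_union, union_empty]

lemma preimage_appP_glue (A : Set (Str n (j+1))) (B : Set (Str n j)) (C : Set (Str n (j+1))) :
    appP ⁻¹' glue A B C = C := by
  rw [glue, preimage_union, preimage_union, appP_injective.preimage_image,
    preimage_image_eq_empty_of_ne fun a b => (appM_ne_appP b a).symm,
    preimage_image_eq_empty_of_ne fun a b => (appO_ne_appP b a).symm, empty_union, empty_union]

lemma exists_eq_appM_or_appO_or_appP (z : Str (n+1) (j+1)) :
    (∃ a, appM a = z) ∨ (∃ b, appO b = z) ∨ ∃ c, appP c = z := by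
  obtain ⟨l, e, hz⟩ := (List.eq_nil_or_concat' z.toList).resolve_left
    (List.ne_nil_of_length_pos (by simp [length_toList]))
  have hlen : l.length = n := by simpa [hz] using length_toList z
  have hcount := count_toList z
  rw [hz, List.count_append] at hcount
  cases e
  · exact Or.inl ⟨⟨l, hlen, by simpa using hcount⟩, toList_injective hz.symm⟩
  · exact Or.inr (Or.inl ⟨⟨l, hlen, by simpa using hcount⟩, toList_injective hz.symm⟩)
  · exact Or.inr (Or.inr ⟨⟨l, hlen, by simpa using hcount⟩, toList_injective hz.symm⟩)

lemma set_eq_iff_preimage_eq {S T : Set (Str (n+1) (j+1))} :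
    S = T ↔ appM ⁻¹' S = appM ⁻¹' T ∧ appO ⁻¹' S = appO ⁻¹' T ∧ appP ⁻¹' S = appP ⁻¹' T := by
  refine ⟨by rintro rfl; simp, fun ⟨hM, hO, hP⟩ => ext fun z => ?_⟩
  rcases exists_eq_appM_or_appO_or_appP z with ⟨a, rfl⟩ | ⟨b, rfl⟩ | ⟨c, rfl⟩
  exacts [Set.ext_iff.1 hM a, Set.ext_iff.1 hO b, Set.ext_iff.1 hP c]

end Str

/-- Equivalence of the movement condition for `x̄⊖ ∪ x⊙ ∪ x̂⊕` with the six
conditions of equation (16) of Buckley–Garner (for `j` odd). -/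
theorem cube_movement_equiv (n j : ℕ) (hj : Odd j)
    (x : Set (Str n (j+1))) (m p : Set (Str n j))
    (xb xh : Set (Str n (j+2))) (mb mh pb ph : Set (Str n (j+1))) :
    MovesC (appM '' xb ∪ appO '' x ∪ appP '' xh)
           (appM '' mb ∪ appO '' m ∪ appP '' mh)
           (appM '' pb ∪ appO '' p ∪ appP '' ph) ↔
      (p = (m ∪ sPos x) \ sNeg x ∧
       m = (p ∪ sNeg x) \ sPos x ∧
       pb = (mb ∪ sPos xb) \ (sNeg xb ∪ x) ∧
       mb = (pb ∪ sNeg xb ∪ x) \ sPos xb ∧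
       ph = (mh ∪ sPos xh ∪ x) \ sNeg xh ∧
       mh = (ph ∪ sNeg xh) \ (sPos xh ∪ x)) := by
  change MovesC (Str.glue xb x xh) (Str.glue mb m mh) (Str.glue pb p ph) ↔ _
  rw [MovesC, Str.sPos_glue hj.add_one, Str.sNeg_glue hj.add_one, Str.set_eq_iff_preimage_eq,
    Str.set_eq_iff_preimage_eq]
  simp only [preimage_sdiff, preimage_union, Str.preimage_appM_glue, Str.preimage_appO_glue,
    Str.preimage_appP_glue, ← union_assoc]
  tauto
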